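/- The upper half-plane ℍ = {z ∈ ℂ : Im z > 0} is a uniform domain with constant c = π/2: for all a, b ∈ ℍ, the hyperbolic geodesic γ joining a and b satisfies length(γ) ≤ (π/2)|a−b|, and for each z ∈ γ, min{length(γ₁), length(γ₂)} ≤ (π/2)·Im z, where γ₁, γ₂ are the components of γ∖{z}. -/

import Mathlib

open Set Complex NNReal ENNReal

lemma abs_exp_I_sub_exp_I (x y : ℝ) :
    ‖Complex.exp (x * I) - Complex.exp (y * I)‖ = 2 * |Real.sin ((x - y) / 2)| := by
  have factor : Complex.exp (x * I) - Complex.exp (y * I)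
      = Complex.exp (((x + y) / 2 : ℝ) * I) * ((2 * Real.sin ((x - y) / 2) : ℝ) * I) := by
    have hc := Real.cos_sub_cos x y
    have hs := Real.sin_sub_sin x y
    have e1 : ∀ u : ℝ, Complex.exp (u * I) = (Real.cos u : ℂ) + (Real.sin u : ℂ) * I := by
      intro u; rw [Complex.exp_mul_I, Complex.ofReal_cos, Complex.ofReal_sin]
    rw [e1, e1, e1]
    rw [Complex.ext_iff]
    constructor <;>
      · simp only [Complex.add_re, Complex.sub_re, Complex.mul_re, Complex.mul_im,
          Complex.add_im, Complex.sub_im, Complex.ofReal_re, Complex.ofReal_im,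
          Complex.I_re, Complex.I_im]
        nlinarith [hc, hs]
  rw [factor, norm_mul, Complex.norm_exp_ofReal_mul_I, one_mul, norm_mul, Complex.norm_I,
    mul_one, Complex.norm_real, Real.norm_eq_abs, abs_mul]
  simp

lemma lipschitz_exp_circle (c r d e : ℝ) (hr : 0 ≤ r) :
    LipschitzWith (Real.toNNReal (r * |d|))
      (fun t : ℝ => (c : ℂ) + (r : ℂ) * Complex.exp ((e + t * d : ℝ) * I)) := by
  apply LipschitzWith.of_dist_le_mul
  intro s t
  have key := abs_exp_I_sub_exp_I (e + s * d) (e + t * d)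
  simp only [Complex.dist_eq, add_sub_add_left_eq_sub, ← mul_sub, norm_mul, Complex.norm_real, Real.norm_eq_abs,
    _root_.abs_of_nonneg hr]
  rw [key]
  have harg : (e + s * d) - (e + t * d) = d * (s - t) := by ring
  rw [harg, Real.coe_toNNReal _ (by positivity), Real.dist_eq]
  have h1 : |Real.sin (d * (s - t) / 2)| ≤ |d * (s - t) / 2| := Real.abs_sin_le_abs
  have h2 : |d * (s - t) / 2| = |d| * |s - t| / 2 := by
    rw [abs_div, abs_mul]; norm_num
  nlinarith [abs_nonneg (s - t), abs_nonneg d]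

lemma evar_lipschitz_le {f : ℝ → ℂ} {K : ℝ≥0} (h : LipschitzWith K f) {u v : ℝ} (huv : u ≤ v) :
    eVariationOn f (Icc u v) ≤ ENNReal.ofReal ((K : ℝ) * (v - u)) := by
  have hid : MonotoneOn (id : ℝ → ℝ) (Icc u v) := fun x _ y _ hxy => hxy
  have h1 : eVariationOn (id : ℝ → ℝ) (Icc u v) ≤ ENNReal.ofReal (v - u) := by
    have := hid.eVariationOn_le (a := u) (b := v) (left_mem_Icc.2 huv) (right_mem_Icc.2 huv)
    simpa [Set.inter_self] using this
  have h2 : eVariationOn (f ∘ id) (Icc u v) ≤ K * eVariationOn (id : ℝ → ℝ) (Icc u v) :=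
    (h.lipschitzOnWith (s := univ)).comp_eVariationOn_le (mapsTo_univ _ _)
  calc eVariationOn f (Icc u v) = eVariationOn (f ∘ id) (Icc u v) := rfl
    _ ≤ K * eVariationOn (id : ℝ → ℝ) (Icc u v) := h2
    _ ≤ K * ENNReal.ofReal (v - u) := mul_le_mul_right h1 _
    _ = ENNReal.ofReal ((K : ℝ) * (v - u)) := by
        rw [ENNReal.ofReal_mul K.coe_nonneg, ENNReal.ofReal_coe_nnreal]

lemma jordan_aux {x : ℝ} (h0 : 0 ≤ x) (h1 : x ≤ Real.pi / 2) : x ≤ Real.pi / 2 * Real.sin x := by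
  have h := Real.mul_le_sin h0 h1
  have hπ := Real.pi_pos
  rw [div_mul_eq_mul_div, div_le_iff₀ hπ] at h
  nlinarith [h]

lemma key_min {θ lo hi : ℝ} (h0 : 0 < lo) (h1 : hi < Real.pi) (hlo : lo ≤ θ) (hhi : θ ≤ hi) :
    min (θ - lo) (hi - θ) ≤ Real.pi / 2 * Real.sin θ := by
  have hθ0 : 0 < θ := lt_of_lt_of_le h0 hlo
  have hθπ : θ < Real.pi := lt_of_le_of_lt hhi h1
  rcases le_total θ (Real.pi - θ) with h | h
  · have hj : θ ≤ Real.pi / 2 * Real.sin θ := jordan_aux hθ0.le (by linarith)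
    calc min (θ - lo) (hi - θ) ≤ θ - lo := min_le_left _ _
      _ ≤ θ := by linarith
      _ ≤ _ := hj
  · have hj : Real.pi - θ ≤ Real.pi / 2 * Real.sin (Real.pi - θ) :=
      jordan_aux (by linarith) (by linarith)
    rw [Real.sin_pi_sub] at hj
    calc min (θ - lo) (hi - θ) ≤ hi - θ := min_le_right _ _
      _ ≤ Real.pi - θ := by linarith
      _ ≤ _ := hj

lemma arg_bounds {A : ℂ} (hA : 0 < A.im) : 0 < A.arg ∧ A.arg < Real.pi := by
  have hA0 : A ≠ 0 := fun h => by simp [h] at hA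
  have hsin : 0 < Real.sin A.arg := by
    rw [Complex.sin_arg]
    exact div_pos hA (norm_pos_iff.mpr hA0)
  constructor
  · by_contra h
    push_neg at h
    have := Real.sin_nonpos_of_nonpos_of_neg_pi_le h (Complex.neg_pi_lt_arg A).le
    linarith
  · rcases lt_or_eq_of_le (Complex.arg_le_pi A) with h | h
    · exact h
    · rw [h, Real.sin_pi] at hsin; linarith

/-- The upper half-plane is a `π/2`-uniform domain: any `a, b` with positive
imaginary part are joined by a curve `γ` in the upper half-plane (namely the
hyperbolic geodesic) whose length is at most `(π/2)·|a − b|`, and such that at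
every point `z = γ t` of the curve the shorter of the two subarcs into which
`z` divides `γ` has length at most `(π/2)·Im z`. -/
theorem upperHalfPlane_uniform (a b : ℂ) (ha : 0 < a.im) (hb : 0 < b.im) :
    ∃ γ : ℝ → ℂ,
      ContinuousOn γ (Icc 0 1) ∧ γ 0 = a ∧ γ 1 = b ∧
      (∀ t ∈ Icc (0 : ℝ) 1, 0 < (γ t).im) ∧
      eVariationOn γ (Icc 0 1) ≤ ENNReal.ofReal (Real.pi / 2 * dist a b) ∧
      (∀ t ∈ Icc (0 : ℝ) 1,
        min (eVariationOn γ (Icc 0 t)) (eVariationOn γ (Icc t 1)) ≤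
          ENNReal.ofReal (Real.pi / 2 * (γ t).im)) := by
  by_cases hre : a.re = b.re
  case pos =>
      have hπ := Real.pi_pos
      set γ : ℝ → ℂ := fun t => a + (t : ℂ) * (b - a) with hγ
      have hK : (0:ℝ) ≤ ‖b - a‖ := norm_nonneg _
      have hlip : LipschitzWith (Real.toNNReal ‖b - a‖) γ := by
        apply LipschitzWith.of_dist_le_mul
        intro s t
        have : γ s - γ t = ((s - t : ℝ) : ℂ) * (b - a) := by simp only [hγ]; push_cast; ring
        rw [Complex.dist_eq, this, norm_mul, Complex.norm_real, Real.norm_eq_abs,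
          Real.coe_toNNReal _ hK, Real.dist_eq]
        ring_nf
        exact le_refl _
      have him : ∀ t : ℝ, (γ t).im = a.im + t * (b.im - a.im) := by
        intro t; simp [hγ]; try ring
      have himpos : ∀ t ∈ Icc (0:ℝ) 1, 0 < (γ t).im := by
        intro t ht
        rw [him]
        rcases le_total a.im b.im with h | h <;> nlinarith [ht.1, ht.2]
      have habs : ‖b - a‖ = |b.im - a.im| := by
        have : b - a = ((b.im - a.im : ℝ) : ℂ) * I := by
          apply Complex.ext <;> simp [hre]
        rw [this, norm_mul, Complex.norm_I, Complex.norm_real, Real.norm_eq_abs, mul_one]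
      refine ⟨γ, (hlip.continuous).continuousOn, by simp [hγ], by simp [hγ], himpos, ?_, ?_⟩
      · refine (evar_lipschitz_le hlip zero_le_one).trans ?_
        apply ENNReal.ofReal_le_ofReal
        rw [Real.coe_toNNReal _ hK, Complex.dist_eq]
        rw [norm_sub_rev a b]
        nlinarith [hK, Real.pi_gt_three]
      · intro t ht
        have h1 := evar_lipschitz_le hlip ht.1
        have h2 := evar_lipschitz_le hlip ht.2
        rw [Real.coe_toNNReal _ hK] at h1 h2
        rcases le_total a.im b.im with h | h
        · refine (min_le_left _ _).trans (h1.trans (ENNReal.ofReal_le_ofReal ?_))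
          rw [habs, _root_.abs_of_nonneg (by linarith), him]
          have := himpos t ht
          rw [him] at this
          nlinarith [ht.1, ht.2, ha, hb, Real.pi_gt_three]
        · refine (min_le_right _ _).trans (h2.trans (ENNReal.ofReal_le_ofReal ?_))
          rw [habs, _root_.abs_of_nonpos (by linarith), him]
          have := himpos t ht
          rw [him] at this
          nlinarith [ht.1, ht.2, ha, hb, Real.pi_gt_three]
  case neg =>
      have hπ := Real.pi_pos
      set c : ℝ := (‖a‖ ^ 2 - ‖b‖ ^ 2) / (2 * (a.re - b.re)) with hcdef
      set A : ℂ := a - (c : ℂ) with hAdef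
      set B : ℂ := b - (c : ℂ) with hBdef
      have hAim : A.im = a.im := by simp [hAdef]
      have hBim : B.im = b.im := by simp [hBdef]
      have habsAB : ‖A‖ = ‖B‖ := by
        have hd : a.re - b.re ≠ 0 := sub_ne_zero.2 hre
        have hc2 : 2 * (a.re - b.re) * c = ‖a‖ ^ 2 - ‖b‖ ^ 2 := by
          rw [hcdef]; field_simp
        have ha2 : ‖a‖ ^ 2 = a.re * a.re + a.im * a.im := by
          rw [Complex.sq_norm, Complex.normSq_apply]
        have hb2 : ‖b‖ ^ 2 = b.re * b.re + b.im * b.im := by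
          rw [Complex.sq_norm, Complex.normSq_apply]
        have hn : Complex.normSq A = Complex.normSq B := by
          simp only [Complex.normSq_apply, hAdef, hBdef, Complex.sub_re, Complex.sub_im,
            Complex.ofReal_re, Complex.ofReal_im, sub_zero]
          nlinarith [hc2, ha2, hb2]
        rw [Complex.norm_def, Complex.norm_def, hn]
      set r : ℝ := ‖A‖ with hrdef
      have hrpos : 0 < r := by
        apply norm_pos_iff.mpr
        intro h
        rw [h] at hAim; simp at hAim; linarith
      set θa := Complex.arg A with hθadef
      set θb := Complex.arg B with hθbdef
      have hA : (r : ℂ) * Complex.exp (θa * I) = A := Complex.norm_mul_exp_arg_mul_I A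
      have hB : (r : ℂ) * Complex.exp (θb * I) = B := by
        rw [habsAB]; exact Complex.norm_mul_exp_arg_mul_I B
      have hθa0 : 0 < θa := (arg_bounds (A := A) (by rw [hAim]; exact ha)).1
      have hθaπ : θa < Real.pi := (arg_bounds (A := A) (by rw [hAim]; exact ha)).2
      have hθb0 : 0 < θb := (arg_bounds (A := B) (by rw [hBim]; exact hb)).1
      have hθbπ : θb < Real.pi := (arg_bounds (A := B) (by rw [hBim]; exact hb)).2
      set d : ℝ := θb - θa with hddef
      have hddef' : d = θb - θa := hddef
      set γ : ℝ → ℂ := fun t => (c : ℂ) + (r : ℂ) * Complex.exp ((θa + t * d : ℝ) * I) with hγ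
      have hlip : LipschitzWith (Real.toNNReal (r * |d|)) γ := by
        rw [hγ]; exact lipschitz_exp_circle c r d θa hrpos.le
      clear_value γ d θb θa r A B c
      clear hcdef hrdef hθadef hθbdef hddef
      have hKcoe : ((Real.toNNReal (r * |d|) : ℝ≥0) : ℝ) = r * |d| :=
        Real.coe_toNNReal _ (by positivity)
      have hγ0 : γ 0 = a := by
        rw [hγ]
        simp only []
        rw [show (θa + 0 * d : ℝ) = θa by ring, hA, hAdef]
        ring
      have hγ1 : γ 1 = b := by
        rw [hγ]
        simp only []
        rw [show (θa + 1 * d : ℝ) = θb by rw [hddef']; ring, hB, hBdef]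
        ring
      have him : ∀ t : ℝ, (γ t).im = r * Real.sin (θa + t * d) := by
        intro t
        rw [hγ]
        simp only []
        rw [Complex.exp_mul_I, ← Complex.ofReal_cos, ← Complex.ofReal_sin]
        simp only [Complex.add_im, Complex.mul_im, Complex.ofReal_re, Complex.ofReal_im,
          Complex.add_re, Complex.mul_re, Complex.I_re, Complex.I_im]
        ring
      have hbetween : ∀ t ∈ Icc (0:ℝ) 1, 0 < θa + t * d ∧ θa + t * d < Real.pi := by
        intro t ht
        rcases le_total 0 d with h | h
        · constructor <;>
            linarith [mul_nonneg ht.1 h, mul_nonneg (sub_nonneg.2 ht.2) h, hddef']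
        · constructor <;>
            linarith [mul_nonneg ht.1 (neg_nonneg.2 h), mul_nonneg (sub_nonneg.2 ht.2) (neg_nonneg.2 h),
              hddef']
      have himpos : ∀ t ∈ Icc (0:ℝ) 1, 0 < (γ t).im := by
        intro t ht
        rw [him]
        exact mul_pos hrpos (Real.sin_pos_of_pos_of_lt_pi (hbetween t ht).1 (hbetween t ht).2)
      have hdπ : |d| < Real.pi := by
        rw [abs_lt]; constructor <;> [skip; skip] <;> rw [hddef'] <;> [linarith; linarith]
      obtain ⟨hdlo, hdhi⟩ := abs_lt.1 hdπ
      have hsinabs : |Real.sin (d / 2)| = Real.sin (|d| / 2) := by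
        rcases le_total 0 d with h | h
        · rw [_root_.abs_of_nonneg h,
            _root_.abs_of_nonneg (Real.sin_nonneg_of_nonneg_of_le_pi (by linarith) (by linarith))]
        · rw [_root_.abs_of_nonpos h, show d / 2 = -(-d / 2) by ring, Real.sin_neg, abs_neg,
            _root_.abs_of_nonneg (Real.sin_nonneg_of_nonneg_of_le_pi (by linarith) (by linarith))]
      have hdist : dist a b = 2 * r * Real.sin (|d| / 2) := by
        have hab : a - b = A - B := by rw [hAdef, hBdef]; ring
        rw [Complex.dist_eq, hab, ← hA, ← hB, ← mul_sub, norm_mul, Complex.norm_real, Real.norm_eq_abs,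
          _root_.abs_of_nonneg hrpos.le, abs_exp_I_sub_exp_I]
        rw [show (θa - θb) / 2 = -(d / 2) by rw [hddef']; ring, Real.sin_neg, abs_neg, hsinabs]
        ring
      have hjordan : |d| / 2 ≤ Real.pi / 2 * Real.sin (|d| / 2) :=
        jordan_aux (by positivity) (by cases abs_cases d <;> linarith)
      refine ⟨γ, hlip.continuous.continuousOn, hγ0, hγ1, himpos, ?_, ?_⟩
      · refine (evar_lipschitz_le hlip zero_le_one).trans (ENNReal.ofReal_le_ofReal ?_)
        rw [hKcoe, hdist]
        nlinarith [hjordan, hrpos, abs_nonneg d]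
      · intro t ht
        have h1 : eVariationOn γ (Icc 0 t) ≤ ENNReal.ofReal (r * |d| * t) := by
          have h := evar_lipschitz_le hlip ht.1
          rw [hKcoe, sub_zero] at h
          exact h
        have h2 : eVariationOn γ (Icc t 1) ≤ ENNReal.ofReal (r * |d| * (1 - t)) := by
          have h := evar_lipschitz_le hlip ht.2
          rw [hKcoe] at h
          exact h
        have hkey : min (|d| * t) (|d| * (1 - t)) ≤ Real.pi / 2 * Real.sin (θa + t * d) := by
          rcases le_total 0 d with h | h
          · have e1 : |d| * t = (θa + t * d) - θa := by rw [_root_.abs_of_nonneg h]; ring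
            have e2 : |d| * (1 - t) = θb - (θa + t * d) := by
              rw [_root_.abs_of_nonneg h, hddef']; ring
            rw [e1, e2]
            exact key_min hθa0 hθbπ (by linarith [mul_nonneg ht.1 h])
              (by linarith [mul_nonneg (sub_nonneg.2 ht.2) h, hddef'])
          · have e1 : |d| * t = θa - (θa + t * d) := by rw [_root_.abs_of_nonpos h]; ring
            have e2 : |d| * (1 - t) = (θa + t * d) - θb := by
              rw [_root_.abs_of_nonpos h, hddef']; ring
            rw [e1, e2, min_comm]
            exact key_min hθb0 hθaπ
              (by linarith [mul_nonneg (sub_nonneg.2 ht.2) (neg_nonneg.2 h), hddef'])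
              (by linarith [mul_nonneg ht.1 (neg_nonneg.2 h)])
        rw [him t]
        rcases le_total (|d| * t) (|d| * (1 - t)) with h | h
        · refine (min_le_left _ _).trans (h1.trans (ENNReal.ofReal_le_ofReal ?_))
          rw [min_eq_left h] at hkey
          nlinarith [hkey, hrpos]
        · refine (min_le_right _ _).trans (h2.trans (ENNReal.ofReal_le_ofReal ?_))
          rw [min_eq_right h] at hkey
          nlinarith [hkey, hrpos]
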